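/- arXiv:2510.11226 — 2 statements merged into one kernel-verified Lean document; each statement's English description precedes it below -/
import Mathlib

section
/- Let (M, dist) be a metric space, let R ≥ 0 and let c > 0 be a real number. For a finite set x ⊆ M define the Geyer saturation statistic G(x) = Σ_{w ∈ x} min( s(w, x, R), c ), where s(w, x, R) = card{ v ∈ x ∖ {w} : dist(w, v) ≤ R }. Let u ∈ M and let x, x' be finite subsets of M with u ∉ x, u ∉ x', and x ∩ B̄(u, 2R) = x' ∩ B̄(u, 2R), where B̄(u, 2R) is the closed ball of radius 2R centered at u. Then G(insert u x) − G(x) = G(insert u x') − G(x'); that is, the local contribution of a new point u to the Geyer saturation statistic depends only on the configuration within distance 2R of u, so the Geyer saturation interaction has finite range 2R. -/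
open scoped Classical

/-- Neighbor count `s(u, x, R)`: the number of points of `x ∖ {u}` within distance `R` of `u`. -/
noncomputable def nbr {M : Type*} [MetricSpace M] (u : M) (x : Finset M) (R : ℝ) : ℕ :=
  ((x.erase u).filter fun v => dist u v ≤ R).card

/-- Geyer saturation statistic `G(x) = ∑_{w ∈ x} min( s(w, x, R), c )`. -/
noncomputable def geyer {M : Type*} [MetricSpace M] (x : Finset M) (R c : ℝ) : ℝ :=
  ∑ w ∈ x, min (nbr w x R : ℝ) c

/-!
Inserting `u` changes the saturation term of `u` itself and of the points `w` with
`dist u w ≤ R`, whose neighbour count goes up by one; all other terms are unchanged. The new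
terms only involve neighbour counts of points within distance `R` of `u`, and such counts
only see points within distance `2R` of `u`, by the triangle inequality.
-/

namespace Geyer

variable {M : Type*} [MetricSpace M] {R : ℝ} {u w : M} {x : Finset M}

theorem nbr_insert_of_dist_le (hwu : w ≠ u) (hux : u ∉ x) (hd : dist w u ≤ R) :
    nbr w (insert u x) R = nbr w x R + 1 := by
  unfold nbr
  rw [Finset.erase_insert_of_ne hwu.symm, Finset.filter_insert, if_pos hd,
    Finset.card_insert_of_notMem fun hu =>
      hux (Finset.mem_of_mem_erase (Finset.mem_filter.1 hu).1)]

theorem nbr_insert_of_not_dist_le (hwu : w ≠ u) (hd : ¬dist w u ≤ R) :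
    nbr w (insert u x) R = nbr w x R := by
  unfold nbr
  rw [Finset.erase_insert_of_ne hwu.symm, Finset.filter_insert, if_neg hd]

theorem nbr_insert_self (hux : u ∉ x) : nbr u (insert u x) R = nbr u x R := by
  unfold nbr
  rw [Finset.erase_insert hux, Finset.erase_eq_of_notMem hux]

theorem nbr_filter_of_forall {p : M → Prop} (hp : ∀ v, dist w v ≤ R → p v) :
    nbr w (x.filter p) R = nbr w x R := by
  unfold nbr
  rw [← Finset.filter_erase, Finset.filter_filter]
  exact congrArg Finset.card (Finset.filter_congr fun v _ => ⟨And.right, fun hv => ⟨hp v hv, hv⟩⟩)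

theorem nbr_filter_closedBall (hw : dist u w ≤ R) :
    nbr w (x.filter (· ∈ Metric.closedBall u (2 * R))) R = nbr w x R :=
  nbr_filter_of_forall fun v hv => by
    rw [Metric.mem_closedBall, two_mul]
    exact (dist_triangle v w u).trans (add_le_add (dist_comm v w ▸ hv) (dist_comm u w ▸ hw))

theorem geyer_insert_sub (c : ℝ) (hux : u ∉ x) :
    geyer (insert u x) R c - geyer x R c =
      min (nbr u x R : ℝ) c + ∑ w ∈ x.filter (dist u · ≤ R),
        (min (nbr w x R + 1 : ℝ) c - min (nbr w x R : ℝ) c) := by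
  rw [geyer, geyer, Finset.sum_insert hux, nbr_insert_self hux, add_sub_assoc,
    ← Finset.sum_sub_distrib, Finset.sum_filter]
  congr 1
  refine Finset.sum_congr rfl fun w hw => ?_
  have hwu : w ≠ u := ne_of_mem_of_not_mem hw hux
  split_ifs with hd
  · rw [nbr_insert_of_dist_le hwu hux (dist_comm u w ▸ hd), Nat.cast_succ]
  · rw [nbr_insert_of_not_dist_le hwu (dist_comm u w ▸ hd), sub_self]

theorem geyer_insert_sub_filter_closedBall (c : ℝ) (hR : 0 ≤ R) (hux : u ∉ x) :
    geyer (insert u x) R c - geyer x R c =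
      geyer (insert u (x.filter (· ∈ Metric.closedBall u (2 * R)))) R c -
        geyer (x.filter (· ∈ Metric.closedBall u (2 * R))) R c := by
  have hux' : u ∉ x.filter (· ∈ Metric.closedBall u (2 * R)) := fun hu =>
    hux (Finset.mem_filter.1 hu).1
  have hnear : (x.filter (· ∈ Metric.closedBall u (2 * R))).filter (dist u · ≤ R) =
      x.filter (dist u · ≤ R) := by
    rw [Finset.filter_filter]
    refine Finset.filter_congr fun v _ => ⟨And.right, fun hv => ⟨?_, hv⟩⟩
    rw [Metric.mem_closedBall, dist_comm]
    linarith
  rw [geyer_insert_sub c hux, geyer_insert_sub c hux', hnear,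
    nbr_filter_closedBall (by simpa using hR)]
  refine congrArg _ (Finset.sum_congr rfl fun w hw => ?_)
  rw [nbr_filter_closedBall (Finset.mem_filter.1 hw).2]

end Geyer

theorem stmt_13_general {M : Type*} [MetricSpace M] (R c : ℝ) (hR : 0 ≤ R) (u : M)
    (x x' : Finset M) (hux : u ∉ x) (hux' : u ∉ x')
    (h : x.filter (fun v => v ∈ Metric.closedBall u (2 * R)) =
         x'.filter (fun v => v ∈ Metric.closedBall u (2 * R))) :
    geyer (insert u x) R c - geyer x R c = geyer (insert u x') R c - geyer x' R c := by
  rw [Geyer.geyer_insert_sub_filter_closedBall c hR hux,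
    Geyer.geyer_insert_sub_filter_closedBall c hR hux', h]

/-- If two finite configurations `x, x'` (not containing `u`) agree on the closed ball
`B̄(u, 2R)`, then the local contribution of `u` to the Geyer saturation statistic is the
same for both: `G(insert u x) − G(x) = G(insert u x') − G(x')`; i.e. the Geyer saturation
interaction has finite range `2R`. -/
theorem stmt_13 {M : Type*} [MetricSpace M] (R c : ℝ) (hR : 0 ≤ R) (hc : 0 < c) (u : M)
    (x x' : Finset M) (hux : u ∉ x) (hux' : u ∉ x')
    (h : x.filter (fun v => v ∈ Metric.closedBall u (2 * R)) =
         x'.filter (fun v => v ∈ Metric.closedBall u (2 * R))) :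
    geyer (insert u x) R c - geyer x R c = geyer (insert u x') R c - geyer x' R c :=
  stmt_13_general R c hR u x x' hux hux' h
end

section
/- Let (M, dist) be a metric space, R ≥ 0, c > 0. For finite sets x, y ⊆ M define the cross Geyer saturation statistic v(x, y) = Σ_{w ∈ x} min( s(w, y, R), c ), where s(w, y, R) = card{ v ∈ y ∖ {w} : dist(w, v) ≤ R }. Then for all finite x, y ⊆ M and u ∉ x ∪ y: (i) v(insert u x, y) − v(x, y) = min( s(u, y, R), c ), so in particular 0 ≤ v(insert u x, y) − v(x, y) ≤ c; and (ii) 0 ≤ v(x, insert u y) − v(x, y) ≤ card( x ∩ B̄(u, R) ), where B̄(u, R) is the closed ball of radius R centered at u. -/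
open scoped Classical

/-- Cross Geyer saturation statistic `v(x, y) = ∑_{w ∈ x} min( s(w, y, R), c )`. -/
noncomputable def crossGeyer {M : Type*} [MetricSpace M] (x y : Finset M) (R c : ℝ) : ℝ :=
  ∑ w ∈ x, min (nbr w y R : ℝ) c

/-!
Adding `u` to the first pattern adds one summand, `min (s(u, y, R)) c`, to the statistic.
Adding `u` to the second pattern raises each count `s(w, y, R)`, `w ∈ x`, by one exactly when
`dist w u ≤ R`, and `t ↦ min t c` is monotone and `1`-Lipschitz, so each summand grows by at most
the indicator of `w ∈ B̄(u, R)`.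
-/

open Finset

lemma min_add_le_min_add {α : Type*} [LinearOrder α] [AddCommGroup α] [IsOrderedAddMonoid α]
    {b : α} (hb : 0 ≤ b) (a c : α) : min (a + b) c ≤ min a c + b := by
  rw [← min_add_add_right]
  exact min_le_min_left _ (le_add_of_nonneg_right hb)

section

variable {M : Type*} [MetricSpace M]

lemma nbr_insert_of_ne {w u : M} {y : Finset M} (R : ℝ) (hwu : w ≠ u) (huy : u ∉ y) :
    nbr w (insert u y) R = nbr w y R + if dist w u ≤ R then 1 else 0 := by
  unfold nbr
  rw [erase_insert_of_ne hwu.symm, filter_insert]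
  split_ifs
  · exact card_insert_of_notMem fun h => huy (mem_of_mem_erase (mem_of_mem_filter _ h))
  · rfl

lemma min_nbr_insert_sub_min_nbr_mem_Icc {w u : M} {y : Finset M} (R c : ℝ) (hwu : w ≠ u)
    (huy : u ∉ y) :
    min (nbr w (insert u y) R : ℝ) c - min (nbr w y R : ℝ) c ∈
      Set.Icc 0 (if w ∈ Metric.closedBall u R then 1 else 0) := by
  have hd : (0 : ℝ) ≤ if w ∈ Metric.closedBall u R then 1 else 0 := by split_ifs <;> norm_num
  rw [nbr_insert_of_ne R hwu huy, Set.mem_Icc, sub_nonneg, sub_le_iff_le_add']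
  push_cast
  exact ⟨min_le_min_right _ (le_add_of_nonneg_right hd), min_add_le_min_add hd _ _⟩

lemma crossGeyer_insert_left {x : Finset M} {u : M} (y : Finset M) (R c : ℝ) (hux : u ∉ x) :
    crossGeyer (insert u x) y R c = min (nbr u y R : ℝ) c + crossGeyer x y R c :=
  sum_insert hux

lemma crossGeyer_sub_crossGeyer (x y y' : Finset M) (R c : ℝ) :
    crossGeyer x y' R c - crossGeyer x y R c =
      ∑ w ∈ x, (min (nbr w y' R : ℝ) c - min (nbr w y R : ℝ) c) :=
  (sum_sub_distrib _ _).symm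

end

theorem stmt_14_general {M : Type*} [MetricSpace M] (R c : ℝ) (hc : 0 < c)
    (x y : Finset M) (u : M) (hu : u ∉ x ∪ y) :
    (crossGeyer (insert u x) y R c - crossGeyer x y R c = min (nbr u y R : ℝ) c ∧
     0 ≤ crossGeyer (insert u x) y R c - crossGeyer x y R c ∧
     crossGeyer (insert u x) y R c - crossGeyer x y R c ≤ c) ∧
    (0 ≤ crossGeyer x (insert u y) R c - crossGeyer x y R c ∧
     crossGeyer x (insert u y) R c - crossGeyer x y R c ≤
       ((x.filter fun v => v ∈ Metric.closedBall u R).card : ℝ)) := by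
  obtain ⟨hux, huy⟩ : u ∉ x ∧ u ∉ y := by simpa only [mem_union, not_or] using hu
  have hleft : crossGeyer (insert u x) y R c - crossGeyer x y R c = min (nbr u y R : ℝ) c := by
    rw [crossGeyer_insert_left y R c hux, add_sub_cancel_right]
  have hterm : ∀ w ∈ x, min (nbr w (insert u y) R : ℝ) c - min (nbr w y R : ℝ) c ∈
      Set.Icc 0 (if w ∈ Metric.closedBall u R then 1 else 0) := fun w hw =>
    min_nbr_insert_sub_min_nbr_mem_Icc R c (ne_of_mem_of_not_mem hw hux) huy
  refine ⟨⟨hleft, hleft ▸ le_min (Nat.cast_nonneg _) hc.le, hleft ▸ min_le_right _ _⟩, ?_, ?_⟩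
  · rw [crossGeyer_sub_crossGeyer]
    exact sum_nonneg fun w hw => (hterm w hw).1
  · rw [crossGeyer_sub_crossGeyer, natCast_card_filter]
    exact sum_le_sum fun w hw => (hterm w hw).2

/-- Local contributions of a new point `u ∉ x ∪ y` to the cross Geyer saturation statistic:
(i) adding `u` to the first pattern contributes exactly `min(s(u, y, R), c)`, hence a value
in `[0, c]`; (ii) adding `u` to the second pattern contributes a nonnegative amount bounded
by the number of points of `x` in the closed ball `B̄(u, R)`. -/
theorem stmt_14 {M : Type*} [MetricSpace M] (R c : ℝ) (hR : 0 ≤ R) (hc : 0 < c)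
    (x y : Finset M) (u : M) (hu : u ∉ x ∪ y) :
    (crossGeyer (insert u x) y R c - crossGeyer x y R c = min (nbr u y R : ℝ) c ∧
     0 ≤ crossGeyer (insert u x) y R c - crossGeyer x y R c ∧
     crossGeyer (insert u x) y R c - crossGeyer x y R c ≤ c) ∧
    (0 ≤ crossGeyer x (insert u y) R c - crossGeyer x y R c ∧
     crossGeyer x (insert u y) R c - crossGeyer x y R c ≤
       ((x.filter fun v => v ∈ Metric.closedBall u R).card : ℝ)) :=
  stmt_14_general R c hc x y u hu
end
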